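/- Let n ≥ 1, m > 0, 0 < θ ≤ 1, and let u₁ ∈ L¹(ℝⁿ). Then there exist δ₁ > δ, a constant α > 0 with α = δ² (1 − √(1 − 4/δ₁² − 4 m² log(1+δ₁^{2θ})/δ₁⁴)), and C > 0 depending only on n and θ, such that for all t > 0, ∫_{δ ≤ |ξ| ≤ δ₁} e^{-|ξ|² t} sinh²(t d(ξ))/d(ξ)² |û₁(ξ)|² dξ ≤ C ‖u₁‖_{L¹}² t² e^{-α t}. -/

import Mathlib

/-!
On the annulus `δ ≤ |ξ| ≤ δ₁` the normalized radicand `f(r)/r⁴` is increasing (both `4/r²` and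
`log(1+r^{2θ})/r⁴` decrease), so `2 d(|ξ|) ≤ β |ξ|²` with `β = √(f(δ₁)/δ₁⁴) < 1`.
With `sinh y ≤ y eʸ` this gives `e^{-|ξ|² t} sinh²(t d)/d² ≤ t² e^{-(1-β)|ξ|² t} ≤ t² e^{-α t}`,
and `|û₁| ≤ ‖u₁‖_{L¹}`; integrating over the bounded annulus yields the estimate.
-/

open MeasureTheory Real

noncomputable section

/-- Euclidean space `ℝⁿ`. -/
abbrev E (n : ℕ) := EuclideanSpace ℝ (Fin n)

/-- The Fourier transform `û₁(ξ) = ∫ e^{-i x·ξ} u₁(x) dx`. -/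
def fourierT (n : ℕ) (u₁ : E n → ℝ) (ξ : E n) : ℂ :=
  ∫ x : E n, Complex.exp (-(Complex.I * ((inner ℝ x ξ : ℝ) : ℂ))) * (u₁ x : ℂ)

/-- `b(r) = (1/2)√(4r² + 4m² log(1+r^{2θ}) − r⁴)` (low frequencies). -/
def bF (m θ r : ℝ) : ℝ :=
  Real.sqrt (4 * r ^ 2 + 4 * m ^ 2 * Real.log (1 + r ^ (2 * θ)) - r ^ 4) / 2

/-- `d(r) = (1/2)√(r⁴ − 4r² − 4m² log(1+r^{2θ}))` (high frequencies). -/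
def dF (m θ r : ℝ) : ℝ :=
  Real.sqrt (r ^ 4 - 4 * r ^ 2 - 4 * m ^ 2 * Real.log (1 + r ^ (2 * θ))) / 2

namespace Real

lemma sinh_le_mul_exp (y : ℝ) : sinh y ≤ y * exp y :=
  calc sinh y = (exp y - exp y * exp (-(2 * y))) / 2 := by
        rw [sinh_eq, ← exp_add]; ring_nf
    _ ≤ (exp y - exp y * (1 - 2 * y)) / 2 := by
        gcongr; linarith [add_one_le_exp (-(2 * y))]
    _ = y * exp y := by ring

lemma sinh_sq_div_sq_le {t d : ℝ} (ht : 0 ≤ t) (hd : 0 ≤ d) :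
    sinh (t * d) ^ 2 / d ^ 2 ≤ t ^ 2 * exp (2 * t * d) := by
  refine div_le_of_le_mul₀ (sq_nonneg d) (by positivity) ?_
  calc sinh (t * d) ^ 2 ≤ (t * d * exp (t * d)) ^ 2 :=
        pow_le_pow_left₀ (sinh_nonneg_iff.2 (mul_nonneg ht hd)) (sinh_le_mul_exp _) 2
    _ = t ^ 2 * exp (2 * t * d) * d ^ 2 := by
        rw [mul_pow, ← exp_nat_mul]; push_cast; ring_nf

lemma log_one_add_rpow_le {a r s : ℝ} (ha : 0 ≤ a) (hr : 0 < r) (hrs : r ≤ s) :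
    log (1 + s ^ a) ≤ log (1 + r ^ a) + a * log (s / r) := by
  have hs₀ : 0 < s := hr.trans_le hrs
  have hq : 1 ≤ (s / r) ^ a := one_le_rpow ((one_le_div hr).2 hrs) ha
  have hs : r ^ a * (s / r) ^ a = s ^ a := by
    rw [← mul_rpow hr.le (by positivity), mul_div_cancel₀ _ hr.ne']
  calc log (1 + s ^ a) ≤ log ((1 + r ^ a) * (s / r) ^ a) :=
        log_le_log (by positivity) (by nlinarith)
    _ = log (1 + r ^ a) + a * log (s / r) := by
        rw [log_mul (by positivity) (by positivity), log_rpow (by positivity)]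

end Real

/-- `f(r)/r⁴`, so that `d(r) = r² √(discRatio m θ r) / 2` and the `α` of the theorem is
`δ² (1 - √(discRatio m θ δ₁))`. -/
def discRatio (m θ r : ℝ) : ℝ :=
  1 - 4 / r ^ 2 - 4 * m ^ 2 * log (1 + r ^ (2 * θ)) / r ^ 4

section discRatio

variable {m θ : ℝ}

/- With `u = log (s / r)`: `log (1 + s^{2θ}) ≤ log (1 + r^{2θ}) + 2θu` and
`(s/r)⁴ = e^{4u} ≥ 1 + 4u`, and the two combine because `log (1 + r^{2θ}) ≥ log 2 ≥ θ / 2`. -/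
lemma pow_four_mul_log_one_add_rpow_le (hθ₀ : 0 ≤ θ) (hθ₁ : θ ≤ 1) {r s : ℝ} (hr : 1 ≤ r)
    (hrs : r ≤ s) : r ^ 4 * log (1 + s ^ (2 * θ)) ≤ s ^ 4 * log (1 + r ^ (2 * θ)) := by
  set u := log (s / r)
  have hr₀ : 0 < r := by linarith
  have hs₀ : 0 < s := by linarith
  have hu : 0 ≤ u := log_nonneg ((one_le_div hr₀).2 hrs)
  have hL : θ / 2 ≤ log (1 + r ^ (2 * θ)) := by
    have h2 : (2 : ℝ) ≤ 1 + r ^ (2 * θ) := by linarith [one_le_rpow hr (by positivity : 0 ≤ 2 * θ)]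
    linarith [log_le_log two_pos h2, log_two_gt_d9]
  have hs : r ^ 4 * (1 + 4 * u) ≤ s ^ 4 := by
    have : s ^ 4 = r ^ 4 * exp (4 * u) := by
      rw [show 4 * u = (4 : ℕ) * u by norm_num, exp_nat_mul, exp_log (by positivity), div_pow,
        mul_div_cancel₀ _ (by positivity)]
    rw [this]; gcongr; linarith [add_one_le_exp (4 * u)]
  calc r ^ 4 * log (1 + s ^ (2 * θ))
      ≤ r ^ 4 * (log (1 + r ^ (2 * θ)) + 2 * θ * u) := by
        gcongr; exact log_one_add_rpow_le (by positivity) hr₀ hrs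
    _ ≤ r ^ 4 * (1 + 4 * u) * log (1 + r ^ (2 * θ)) := by
        have : 2 * θ * u ≤ 4 * u * log (1 + r ^ (2 * θ)) := by nlinarith
        nlinarith [pow_pos hr₀ 4]
    _ ≤ s ^ 4 * log (1 + r ^ (2 * θ)) := by gcongr; linarith

lemma monotoneOn_discRatio (hθ₀ : 0 ≤ θ) (hθ₁ : θ ≤ 1) :
    MonotoneOn (discRatio m θ) (Set.Ici 1) := by
  intro r (hr : 1 ≤ r) s (hs : 1 ≤ s) hrs
  have hr₀ : 0 < r := by linarith
  have hlog : log (1 + s ^ (2 * θ)) / s ^ 4 ≤ log (1 + r ^ (2 * θ)) / r ^ 4 := by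
    rw [div_le_div_iff₀ (by positivity) (by positivity)]
    linarith [pow_four_mul_log_one_add_rpow_le hθ₀ hθ₁ hr hrs]
  have hsq : 4 / s ^ 2 ≤ 4 / r ^ 2 := by gcongr
  simp only [discRatio, mul_div_assoc]
  nlinarith [sq_nonneg m]

lemma sqrt_discRatio_lt_one {s : ℝ} (hs : 0 < s) : √(discRatio m θ s) < 1 := by
  have hlog : 0 ≤ log (1 + s ^ (2 * θ)) := log_nonneg (by linarith [rpow_nonneg hs.le (2 * θ)])
  rw [sqrt_lt' one_pos, discRatio]
  have : 0 < 4 / s ^ 2 := by positivity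
  have : 0 ≤ 4 * m ^ 2 * log (1 + s ^ (2 * θ)) / s ^ 4 := by positivity
  linarith

lemma two_mul_dF_le (hθ₀ : 0 ≤ θ) (hθ₁ : θ ≤ 1) {r s : ℝ} (hr : 1 ≤ r) (hrs : r ≤ s) :
    2 * dF m θ r ≤ √(discRatio m θ s) * r ^ 2 := by
  have hr₀ : r ≠ 0 := by positivity
  have hf : r ^ 4 - 4 * r ^ 2 - 4 * m ^ 2 * log (1 + r ^ (2 * θ)) =
      discRatio m θ r * (r ^ 2) ^ 2 := by
    rw [discRatio]; field_simp
  rw [dF, mul_div_cancel₀ _ two_ne_zero, hf, sqrt_mul' _ (by positivity), sqrt_sq (by positivity)]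
  gcongr
  exact monotoneOn_discRatio hθ₀ hθ₁ hr (le_trans hr hrs) hrs

lemma exp_mul_sinh_sq_div_dF_sq_le (hθ₀ : 0 ≤ θ) (hθ₁ : θ ≤ 1) {δ r s t : ℝ} (hδ : 1 ≤ δ)
    (hδr : δ ≤ r) (hrs : r ≤ s) (ht : 0 ≤ t) :
    exp (-(r ^ 2) * t) * sinh (t * dF m θ r) ^ 2 / dF m θ r ^ 2 ≤
      t ^ 2 * exp (-(δ ^ 2 * (1 - √(discRatio m θ s))) * t) := by
  set β := √(discRatio m θ s)
  have hβ : β < 1 := sqrt_discRatio_lt_one (by linarith)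
  have hd : 2 * t * dF m θ r ≤ β * r ^ 2 * t := by
    nlinarith [two_mul_dF_le (m := m) hθ₀ hθ₁ (hδ.trans hδr) hrs]
  have hexp : -(r ^ 2) * t + β * r ^ 2 * t ≤ -(δ ^ 2 * (1 - β)) * t := by
    have : δ ^ 2 ≤ r ^ 2 := pow_le_pow_left₀ (by linarith) hδr 2
    nlinarith [mul_nonneg (mul_nonneg (sub_nonneg.2 hβ.le) (sub_nonneg.2 this)) ht]
  calc exp (-(r ^ 2) * t) * sinh (t * dF m θ r) ^ 2 / dF m θ r ^ 2
      = exp (-(r ^ 2) * t) * (sinh (t * dF m θ r) ^ 2 / dF m θ r ^ 2) := mul_div_assoc ..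
    _ ≤ exp (-(r ^ 2) * t) * (t ^ 2 * exp (β * r ^ 2 * t)) := by
        have hd₀ : 0 ≤ dF m θ r := div_nonneg (sqrt_nonneg _) zero_le_two
        gcongr
        exact (sinh_sq_div_sq_le ht hd₀).trans (by gcongr)
    _ = t ^ 2 * exp (-(r ^ 2) * t + β * r ^ 2 * t) := by rw [exp_add]; ring
    _ ≤ t ^ 2 * exp (-(δ ^ 2 * (1 - β)) * t) := by gcongr

end discRatio

lemma norm_fourierT_le (n : ℕ) (u : E n → ℝ) (ξ : E n) : ‖fourierT n u ξ‖ ≤ ∫ x : E n, |u x| :=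
  (norm_integral_le_integral_norm _).trans_eq <| integral_congr_ae <| .of_forall fun x => by
    simp [Complex.norm_exp]

open MeasureTheory in
theorem stmt11_general (n : ℕ) (m θ : ℝ) (hθ1 : 0 < θ) (hθ2 : θ ≤ 1)
    (δ : ℝ) (hδ2 : 2 < δ)
    (u₁ : E n → ℝ) :
    ∃ δ₁ : ℝ, δ < δ₁ ∧ ∃ α : ℝ,
      α = δ ^ 2 * (1 - Real.sqrt (1 - 4 / δ₁ ^ 2 -
            4 * m ^ 2 * Real.log (1 + δ₁ ^ (2 * θ)) / δ₁ ^ 4)) ∧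
      0 < α ∧ ∃ C : ℝ, 0 < C ∧
        ∀ t : ℝ, 0 < t →
          (∫ ξ in {ξ : E n | δ ≤ ‖ξ‖ ∧ ‖ξ‖ ≤ δ₁},
              Real.exp (-(‖ξ‖ ^ 2) * t) * Real.sinh (t * dF m θ ‖ξ‖) ^ 2 / dF m θ ‖ξ‖ ^ 2 *
                ‖fourierT n u₁ ξ‖ ^ 2) ≤
            C * (∫ x : E n, |u₁ x|) ^ 2 * t ^ 2 * Real.exp (-α * t) := by
  set δ₁ := δ + 1
  set α := δ ^ 2 * (1 - √(discRatio m θ δ₁))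
  set V := volume.real (Metric.closedBall (0 : E n) δ₁)
  refine ⟨δ₁, by linarith, α, rfl, mul_pos (by positivity) (sub_pos.2 (sqrt_discRatio_lt_one
    (by linarith))), V + 1, by positivity, fun t ht => ?_⟩
  set S := {ξ : E n | δ ≤ ‖ξ‖ ∧ ‖ξ‖ ≤ δ₁}
  set M := ∫ x : E n, |u₁ x|
  have hS : S ⊆ Metric.closedBall 0 δ₁ := fun ξ hξ => mem_closedBall_zero_iff.2 hξ.2
  have hbound : ∀ ξ ∈ S, ‖exp (-(‖ξ‖ ^ 2) * t) * sinh (t * dF m θ ‖ξ‖) ^ 2 / dF m θ ‖ξ‖ ^ 2 *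
      ‖fourierT n u₁ ξ‖ ^ 2‖ ≤ t ^ 2 * exp (-α * t) * M ^ 2 := fun ξ ⟨hδξ, hξδ₁⟩ => by
    rw [Real.norm_of_nonneg (by positivity)]
    gcongr
    · exact exp_mul_sinh_sq_div_dF_sq_le hθ1.le hθ2 (by linarith) hδξ hξδ₁ ht.le
    · exact norm_fourierT_le n u₁ ξ
  calc _ ≤ ‖∫ ξ in S, exp (-(‖ξ‖ ^ 2) * t) * sinh (t * dF m θ ‖ξ‖) ^ 2 / dF m θ ‖ξ‖ ^ 2 *
          ‖fourierT n u₁ ξ‖ ^ 2‖ := Real.le_norm_self _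
    _ ≤ t ^ 2 * exp (-α * t) * M ^ 2 * volume.real S :=
        norm_setIntegral_le_of_norm_le_const
          ((measure_mono hS).trans_lt measure_closedBall_lt_top) hbound
    _ ≤ t ^ 2 * exp (-α * t) * M ^ 2 * (V + 1) := by
        gcongr
        exact (measureReal_mono hS measure_closedBall_lt_top.ne).trans
          (le_add_of_nonneg_right zero_le_one)
    _ = (V + 1) * M ^ 2 * t ^ 2 * exp (-α * t) := by ring

open MeasureTheory in
/-- exponential decay on the zone `δ ≤ |ξ| ≤ δ₁`. -/
theorem stmt11 (n : ℕ) (hn : 1 ≤ n) (m θ : ℝ) (hm : 0 < m) (hθ1 : 0 < θ) (hθ2 : θ ≤ 1)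
    (δ : ℝ) (hδ2 : 2 < δ)
    (hδneg : ∀ r : ℝ, 0 < r → r < δ →
      r ^ 4 - 4 * r ^ 2 - 4 * m ^ 2 * Real.log (1 + r ^ (2 * θ)) < 0)
    (hδpos : ∀ r : ℝ, δ ≤ r →
      0 ≤ r ^ 4 - 4 * r ^ 2 - 4 * m ^ 2 * Real.log (1 + r ^ (2 * θ)))
    (u₁ : E n → ℝ) (hu₁ : Integrable u₁) :
    ∃ δ₁ : ℝ, δ < δ₁ ∧ ∃ α : ℝ,
      α = δ ^ 2 * (1 - Real.sqrt (1 - 4 / δ₁ ^ 2 -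
            4 * m ^ 2 * Real.log (1 + δ₁ ^ (2 * θ)) / δ₁ ^ 4)) ∧
      0 < α ∧ ∃ C : ℝ, 0 < C ∧
        ∀ t : ℝ, 0 < t →
          (∫ ξ in {ξ : E n | δ ≤ ‖ξ‖ ∧ ‖ξ‖ ≤ δ₁},
              Real.exp (-(‖ξ‖ ^ 2) * t) * Real.sinh (t * dF m θ ‖ξ‖) ^ 2 / dF m θ ‖ξ‖ ^ 2 *
                ‖fourierT n u₁ ξ‖ ^ 2) ≤
            C * (∫ x : E n, |u₁ x|) ^ 2 * t ^ 2 * Real.exp (-α * t) :=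
  stmt11_general n m θ hθ1 hθ2 δ hδ2 u₁

end
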